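/- arXiv:2404.19220 — 2 statements merged into one kernel-verified Lean document; each statement's English description precedes it below -/
import Mathlib

section
/- For any matrix M ∈ ℝ^{(p1 p2)×(q1 q2)} and any β1 ∈ ℝ^{p1×q1}, β2 ∈ ℝ^{p2×q2}, ‖M − β2 ⊗ β1‖_F = ‖R(M) − vec(β2) vec(β1)ᵀ‖_F. Consequently, the nearest Kronecker product problem min_{β1,β2} ‖M − β2 ⊗ β1‖_F is equivalent to finding the nearest rank-one approximation of R(M). -/
open Matrix Kronecker
namespace KPF

/-- Column-major vectorization of a matrix, indexed by (column, row). -/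
def vec {p q : ℕ} (M : Matrix (Fin p) (Fin q) ℝ) : Fin q × Fin p → ℝ :=
  fun jc => M jc.2 jc.1

/-- The Pitsianis–Van Loan rearrangement operator: rows of `R M` are the
vectorized `p1 × q1` blocks of `M`. -/
def R {p1 p2 q1 q2 : ℕ} (M : Matrix (Fin p2 × Fin p1) (Fin q2 × Fin q1) ℝ) :
    Matrix (Fin q2 × Fin p2) (Fin q1 × Fin p1) ℝ :=
  fun ji cr => M (ji.2, cr.2) (ji.1, cr.1)

/-- Frobenius norm. -/
noncomputable def frob {m n : Type*} [Fintype m] [Fintype n] (M : Matrix m n ℝ) : ℝ :=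
  Real.sqrt (∑ i, ∑ j, (M i j) ^ 2)

/-- Spectral (ℓ2 operator) norm. -/
noncomputable def spec {m n : Type*} [Fintype m] [Fintype n] [DecidableEq n]
    (A : Matrix m n ℝ) : ℝ :=
  ‖LinearMap.toContinuousLinearMap (Matrix.toEuclideanLin A)‖

/-- Singular values of a matrix, in non-increasing order. -/
noncomputable def sv {m n : ℕ} (A : Matrix (Fin m) (Fin n) ℝ) : Fin n → ℝ :=
  fun k =>
    Real.sqrt ((Matrix.isHermitian_conjTranspose_mul_self A).eigenvalues
      (Tuple.sort (Matrix.isHermitian_conjTranspose_mul_self A).eigenvalues k.rev))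

/-- Smallest singular value of a square matrix. -/
noncomputable def sMin {d : ℕ} (A : Matrix (Fin d) (Fin d) ℝ) : ℝ :=
  sInf (Set.range (sv A))

/-- sin-Θ distance between the column spans of two orthonormal matrices. -/
noncomputable def sinTheta {p d : ℕ} (W1 W2 : Matrix (Fin p) (Fin d) ℝ) : ℝ :=
  Real.sqrt (1 - (sMin (W1ᵀ * W2)) ^ 2)

theorem frob_eq_of_equiv_entries {m n m' n' : Type*} [Fintype m] [Fintype n]
    [Fintype m'] [Fintype n'] (A : Matrix m n ℝ) (B : Matrix m' n' ℝ)
    (e : m × n ≃ m' × n') (h : ∀ x, B (e x).1 (e x).2 = A x.1 x.2) :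
    frob B = frob A := by
  unfold frob
  congr 1
  rw [← Fintype.sum_prod_type' (fun i j => A i j ^ 2),
    ← Fintype.sum_prod_type' (fun i j => B i j ^ 2)]
  exact (Fintype.sum_equiv e _ _ fun x => by rw [h]).symm

theorem frob_R {p1 p2 q1 q2 : ℕ} (M : Matrix (Fin p2 × Fin p1) (Fin q2 × Fin q1) ℝ) :
    frob (R M) = frob M :=
  frob_eq_of_equiv_entries M (R M)
    ⟨fun x => ((x.2.1, x.1.1), (x.2.2, x.1.2)),
      fun y => ((y.1.2, y.2.2), (y.1.1, y.2.1)), fun _ => rfl, fun _ => rfl⟩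
    fun _ => rfl

theorem R_sub {p1 p2 q1 q2 : ℕ} (M N : Matrix (Fin p2 × Fin p1) (Fin q2 × Fin q1) ℝ) :
    R (M - N) = R M - R N :=
  rfl

theorem R_kronecker {p1 p2 q1 q2 : ℕ} (β1 : Matrix (Fin p1) (Fin q1) ℝ)
    (β2 : Matrix (Fin p2) (Fin q2) ℝ) :
    R (β2 ⊗ₖ β1) = vecMulVec (vec β2) (vec β1) :=
  rfl

theorem frob_sub_kronecker_eq_frob_R_sub_vecMulVec {p1 p2 q1 q2 : ℕ}
    (M : Matrix (Fin p2 × Fin p1) (Fin q2 × Fin q1) ℝ)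
    (β1 : Matrix (Fin p1) (Fin q1) ℝ) (β2 : Matrix (Fin p2) (Fin q2) ℝ) :
    frob (M - β2 ⊗ₖ β1) = frob (R M - vecMulVec (vec β2) (vec β1)) := by
  rw [← R_kronecker, ← R_sub, frob_R]

/-- ‖M − β2 ⊗ β1‖_F = ‖R(M) − vec(β2)vec(β1)ᵀ‖_F, so the nearest Kronecker
product problem is equivalent to nearest rank-one approximation of R(M). -/
theorem stmt5 {p1 p2 q1 q2 : ℕ}
    (M : Matrix (Fin p2 × Fin p1) (Fin q2 × Fin q1) ℝ) :
    (∀ (β1 : Matrix (Fin p1) (Fin q1) ℝ) (β2 : Matrix (Fin p2) (Fin q2) ℝ),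
      frob (M - β2 ⊗ₖ β1) = frob (R M - Matrix.vecMulVec (vec β2) (vec β1))) ∧
    sInf {r : ℝ | ∃ (β1 : Matrix (Fin p1) (Fin q1) ℝ) (β2 : Matrix (Fin p2) (Fin q2) ℝ),
        r = frob (M - β2 ⊗ₖ β1)} =
      sInf {r : ℝ | ∃ (β1 : Matrix (Fin p1) (Fin q1) ℝ) (β2 : Matrix (Fin p2) (Fin q2) ℝ),
        r = frob (R M - Matrix.vecMulVec (vec β2) (vec β1))} := by
  refine ⟨frob_sub_kronecker_eq_frob_R_sub_vecMulVec M, ?_⟩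
  simp only [frob_sub_kronecker_eq_frob_R_sub_vecMulVec]

end KPF
end

section
/- The parametrization ν = β2 ⊗ β1 is identifiable only up to scaling: if β1, β1' ∈ ℝ^{p1×q1} and β2, β2' ∈ ℝ^{p2×q2} are all nonzero and β2 ⊗ β1 = β2' ⊗ β1', then there exists a nonzero scalar c with β1' = c β1 and β2' = c^{-1} β2. -/
open Matrix Kronecker
theorem Function.exists_smul_of_mul_eq_mul {ι κ K : Type*} [Field K] {f f' : ι → K}
    {g g' : κ → K} (hf : f ≠ 0) (hg : g ≠ 0) (h : ∀ i a, f i * g a = f' i * g' a) :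
    ∃ c : K, c ≠ 0 ∧ g' = c • g ∧ f' = c⁻¹ • f := by
  obtain ⟨i₀, hi₀⟩ := Function.ne_iff.mp hf
  obtain ⟨a₀, ha₀⟩ := Function.ne_iff.mp hg
  have hprod : f' i₀ * g' a₀ ≠ 0 := h i₀ a₀ ▸ mul_ne_zero hi₀ ha₀
  have hf'i₀ : f' i₀ ≠ 0 := left_ne_zero_of_mul hprod
  have hg'a₀ : g' a₀ ≠ 0 := right_ne_zero_of_mul hprod
  refine ⟨f i₀ / f' i₀, div_ne_zero hi₀ hf'i₀, funext fun a => ?_, funext fun i => ?_⟩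
  · rw [Pi.smul_apply, smul_eq_mul, div_mul_eq_mul_div, eq_div_iff hf'i₀, h i₀ a, mul_comm]
  · have hcross : f' i * f i₀ = f i * f' i₀ := by
      refine mul_right_cancel₀ hg'a₀ ?_
      calc f' i * f i₀ * g' a₀ = f i₀ * (f' i * g' a₀) := by ring
        _ = f i₀ * (f i * g a₀) := by rw [h i a₀]
        _ = f i * (f i₀ * g a₀) := by ring
        _ = f i * f' i₀ * g' a₀ := by rw [h i₀ a₀, mul_assoc]
    rw [Pi.smul_apply, smul_eq_mul, inv_div, div_mul_eq_mul_div, eq_div_iff hi₀, hcross, mul_comm]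

theorem Matrix.exists_smul_of_kronecker_eq {l m n p K : Type*} [Field K]
    {A A' : Matrix l m K} {B B' : Matrix n p K} (hA : A ≠ 0) (hB : B ≠ 0)
    (h : A ⊗ₖ B = A' ⊗ₖ B') : ∃ c : K, c ≠ 0 ∧ B' = c • B ∧ A' = c⁻¹ • A := by
  have hentry (x : l × m) (y : n × p) : A x.1 x.2 * B y.1 y.2 = A' x.1 x.2 * B' y.1 y.2 :=
    congrFun (congrFun h (x.1, y.1)) (x.2, y.2)
  obtain ⟨c, hc, hB', hA'⟩ := Function.exists_smul_of_mul_eq_mul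
    (fun h0 => hA (Matrix.ext fun i j => congrFun h0 (i, j)))
    (fun h0 => hB (Matrix.ext fun i j => congrFun h0 (i, j))) hentry
  exact ⟨c, hc, Matrix.ext fun i j => congrFun hB' (i, j),
    Matrix.ext fun i j => congrFun hA' (i, j)⟩

namespace KPF

theorem stmt8_general {p1 q1 p2 q2 : ℕ}
    (β1 β1' : Matrix (Fin p1) (Fin q1) ℝ) (β2 β2' : Matrix (Fin p2) (Fin q2) ℝ)
    (h1 : β1 ≠ 0) (h2 : β2 ≠ 0)
    (h : β2 ⊗ₖ β1 = β2' ⊗ₖ β1') :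
    ∃ c : ℝ, c ≠ 0 ∧ β1' = c • β1 ∧ β2' = c⁻¹ • β2 :=
  Matrix.exists_smul_of_kronecker_eq h2 h1 h

/-- Identifiability of the Kronecker factorization up to scaling. -/
theorem stmt8 {p1 q1 p2 q2 : ℕ}
    (β1 β1' : Matrix (Fin p1) (Fin q1) ℝ) (β2 β2' : Matrix (Fin p2) (Fin q2) ℝ)
    (h1 : β1 ≠ 0) (h2 : β2 ≠ 0) (h1' : β1' ≠ 0) (h2' : β2' ≠ 0)
    (h : β2 ⊗ₖ β1 = β2' ⊗ₖ β1') :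
    ∃ c : ℝ, c ≠ 0 ∧ β1' = c • β1 ∧ β2' = c⁻¹ • β2 :=
  stmt8_general β1 β1' β2 β2' h1 h2 h

end KPF
end
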